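/- arXiv:2409.20210 — 4 statements merged into one kernel-verified Lean document; each statement's English description precedes it below -/
import Mathlib

section
/- For r = s = 1, the number c(n) of compositions of n with parts in A = {1} ∪ {2p : p ≥ 1} = {1, 2, 4, 6, 8, ...} satisfies the recurrence c(n) = c(n-1) + 2c(n-2) - c(n-3) for n ≥ 3, with c(0) = 1, c(1) = 1, c(2) = 2. -/
/-!
Split the compositions of `n ≥ 1` by their first part. Those starting with `1` correspond to
compositions of `n - 1`, so `c n = c (n - 1) + e n`, where `e n` counts the compositions starting
with an even part. Among these, those starting with `2` correspond to compositions of `n - 2`, and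
lowering a first part `≥ 4` by `2` is a bijection onto the compositions of `n - 2` starting with
an even part, so `e n = c (n - 2) + e (n - 2)`. Eliminating `e` with the first identity at `n - 2`
gives the recurrence.
-/

open Function

theorem List.modifyHead_injective {α : Type*} {f : α → α} (hf : Injective f) :
    Injective (List.modifyHead f) := by
  rintro (_ | ⟨a, s⟩) (_ | ⟨b, t⟩) h <;> simp_all [hf.eq_iff]

def compositionsWith (P : ℕ → Prop) (n : ℕ) : Set (List ℕ) :=
  {l | l.sum = n ∧ ∀ x ∈ l, P x}

section compositionsWith

variable {P : ℕ → Prop} {n a : ℕ}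

theorem nil_mem_compositionsWith_iff : [] ∈ compositionsWith P n ↔ n = 0 := by
  simp [compositionsWith, eq_comm]

theorem cons_mem_compositionsWith_iff {t : List ℕ} :
    a :: t ∈ compositionsWith P n ↔ P a ∧ a ≤ n ∧ t ∈ compositionsWith P (n - a) := by
  simp only [compositionsWith, Set.mem_ofPred_eq, List.sum_cons, List.forall_mem_cons]
  constructor
  · rintro ⟨hsum, ha, ht⟩
    exact ⟨ha, by omega, by omega, ht⟩
  · rintro ⟨ha, han, hsum, ht⟩
    exact ⟨by omega, ha, ht⟩

theorem compositionsWith_zero (hP : ∀ x, P x → 0 < x) : compositionsWith P 0 = {[]} := by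
  ext (_ | ⟨x, t⟩)
  · simp [nil_mem_compositionsWith_iff]
  · simp only [cons_mem_compositionsWith_iff, Set.mem_singleton_iff, reduceCtorEq, iff_false]
    exact fun ⟨hx, hx0, _⟩ => (hP x hx).ne' (by omega)

theorem finite_compositionsWith (hP : ∀ x, P x → 0 < x) (n : ℕ) :
    (compositionsWith P n).Finite := by
  have : Finite (compositionsWith P n) :=
    Finite.of_injective
      (fun l => (⟨l.1, fun hx => hP _ (l.2.2 _ hx), l.2.1⟩ : Composition n))
      (fun l m h => Subtype.ext (congrArg Composition.blocks h))
  exact Set.toFinite _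

theorem compositionsWith_inter_head?_eq (ha : P a) (han : a ≤ n) :
    compositionsWith P n ∩ {l | l.head? = some a} = (a :: ·) '' compositionsWith P (n - a) := by
  ext (_ | ⟨x, t⟩)
  · simp
  · simp only [Set.mem_inter_iff, Set.mem_ofPred_eq, List.head?_cons, Option.some.injEq,
      Set.mem_image, List.cons.injEq, cons_mem_compositionsWith_iff]
    constructor
    · rintro ⟨⟨-, -, ht⟩, rfl⟩
      exact ⟨t, ht, rfl, rfl⟩
    · rintro ⟨t, ht, rfl, rfl⟩
      exact ⟨⟨ha, han, ht⟩, rfl⟩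

theorem ncard_compositionsWith_inter_head?_eq (ha : P a) (han : a ≤ n) :
    (compositionsWith P n ∩ {l | l.head? = some a}).ncard =
      (compositionsWith P (n - a)).ncard := by
  rw [compositionsWith_inter_head?_eq ha han, Set.ncard_image_of_injective _ List.cons_injective]

end compositionsWith

def OneOrPosEven (x : ℕ) : Prop := x = 1 ∨ ∃ p : ℕ, 1 ≤ p ∧ x = 2 * p

theorem oneOrPosEven_iff {x : ℕ} : OneOrPosEven x ↔ x = 1 ∨ (0 < x ∧ Even x) := by
  simp only [OneOrPosEven, Nat.even_iff]
  constructor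
  · rintro (h | ⟨p, hp, rfl⟩) <;> omega
  · rintro (h | ⟨hx, hx2⟩)
    · exact .inl h
    · exact .inr ⟨x / 2, by omega, by omega⟩

theorem OneOrPosEven.pos {x : ℕ} (hx : OneOrPosEven x) : 0 < x := by
  rcases oneOrPosEven_iff.1 hx with rfl | ⟨hx, -⟩ <;> omega

def evenHeaded (n : ℕ) : Set (List ℕ) :=
  compositionsWith OneOrPosEven n ∩ {l | ∃ a ∈ l.head?, Even a}

theorem cons_mem_evenHeaded_iff {x : ℕ} {t : List ℕ} {n : ℕ} :
    x :: t ∈ evenHeaded n ↔ x :: t ∈ compositionsWith OneOrPosEven n ∧ Even x := by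
  simp [evenHeaded]

theorem compositionsWith_sdiff_head?_eq_evenHeaded {n : ℕ} (hn : 1 ≤ n) :
    compositionsWith OneOrPosEven n \ {l | l.head? = some 1} = evenHeaded n := by
  ext (_ | ⟨x, t⟩)
  · simp [evenHeaded, nil_mem_compositionsWith_iff]
    omega
  · rw [cons_mem_evenHeaded_iff]
    simp only [Set.mem_sdiff, Set.mem_ofPred_eq, List.head?_cons, Option.some.injEq]
    refine and_congr_right fun hl => ?_
    have hx := oneOrPosEven_iff.1 (cons_mem_compositionsWith_iff.1 hl).1
    rw [Nat.even_iff] at hx ⊢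
    omega

theorem evenHeaded_inter_head?_two (n : ℕ) :
    evenHeaded n ∩ {l | l.head? = some 2} =
      compositionsWith OneOrPosEven n ∩ {l | l.head? = some 2} := by
  rw [evenHeaded, Set.inter_assoc]
  congr 1
  exact Set.inter_eq_right.2 fun l hl => ⟨2, hl, even_two⟩

theorem evenHeaded_sdiff_head?_two {n : ℕ} (hn : 2 ≤ n) :
    evenHeaded n \ {l | l.head? = some 2} = List.modifyHead (· + 2) '' evenHeaded (n - 2) := by
  ext (_ | ⟨x, t⟩)
  · simp [evenHeaded]
  · simp only [Set.mem_sdiff, Set.mem_ofPred_eq, List.head?_cons, Option.some.injEq,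
      cons_mem_evenHeaded_iff, cons_mem_compositionsWith_iff, oneOrPosEven_iff, Nat.even_iff]
    constructor
    · rintro ⟨⟨⟨hx, hxn, ht⟩, hx2⟩, hx2'⟩
      refine ⟨(x - 2) :: t, ?_, ?_⟩
      · rw [cons_mem_evenHeaded_iff, cons_mem_compositionsWith_iff, oneOrPosEven_iff,
          Nat.even_iff, Nat.sub_sub, Nat.add_sub_of_le (by omega)]
        exact ⟨⟨by omega, by omega, ht⟩, by omega⟩
      · simp only [List.modifyHead_cons]
        congr
        omega
    · rintro ⟨_ | ⟨y, s⟩, hl, h⟩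
      · simp at h
      · simp only [List.modifyHead_cons, List.cons.injEq] at h
        obtain ⟨rfl, rfl⟩ := h
        rw [cons_mem_evenHeaded_iff, cons_mem_compositionsWith_iff, oneOrPosEven_iff,
          Nat.even_iff, Nat.sub_sub] at hl
        obtain ⟨⟨hy, hyn, hs⟩, hy2⟩ := hl
        refine ⟨⟨⟨by omega, by omega, ?_⟩, by omega⟩, by omega⟩
        rwa [Nat.add_comm y 2]

theorem evenHeaded_eq_empty {n : ℕ} (hn : n ≤ 1) : evenHeaded n = ∅ := by
  refine Set.eq_empty_of_forall_notMem ?_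
  rintro (_ | ⟨x, t⟩) hl
  · simp [evenHeaded] at hl
  · obtain ⟨hl, heven⟩ := cons_mem_evenHeaded_iff.1 hl
    obtain ⟨hx, hxn, -⟩ := cons_mem_compositionsWith_iff.1 hl
    rw [Nat.even_iff] at heven
    have := hx.pos
    omega

theorem finite_compositionsWith_oneOrPosEven (n : ℕ) :
    (compositionsWith OneOrPosEven n).Finite :=
  finite_compositionsWith (fun _ hx => hx.pos) n

theorem ncard_compositionsWith_oneOrPosEven {n : ℕ} (hn : 1 ≤ n) :
    (compositionsWith OneOrPosEven n).ncard =
      (compositionsWith OneOrPosEven (n - 1)).ncard + (evenHeaded n).ncard := by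
  rw [← Set.ncard_inter_add_ncard_sdiff_eq_ncard _ {l | l.head? = some 1}
      (finite_compositionsWith_oneOrPosEven n),
    ncard_compositionsWith_inter_head?_eq (.inl rfl) hn,
    compositionsWith_sdiff_head?_eq_evenHeaded hn]

theorem ncard_evenHeaded {n : ℕ} (hn : 2 ≤ n) :
    (evenHeaded n).ncard =
      (compositionsWith OneOrPosEven (n - 2)).ncard + (evenHeaded (n - 2)).ncard := by
  rw [← Set.ncard_inter_add_ncard_sdiff_eq_ncard (evenHeaded n) {l | l.head? = some 2}
      ((finite_compositionsWith_oneOrPosEven n).inter_of_left _),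
    evenHeaded_inter_head?_two,
    ncard_compositionsWith_inter_head?_eq (.inr ⟨1, le_rfl, rfl⟩) hn,
    evenHeaded_sdiff_head?_two hn,
    Set.ncard_image_of_injective _ (List.modifyHead_injective (add_left_injective 2))]

theorem compositions_one_evens_recurrence
    (c : ℕ → ℕ)
    (hc : ∀ n, c n = Nat.card {l : List ℕ | l.sum = n ∧
      ∀ x ∈ l, x = 1 ∨ ∃ p : ℕ, 1 ≤ p ∧ x = 2 * p}) :
    c 0 = 1 ∧ c 1 = 1 ∧ c 2 = 2 ∧
    ∀ n, 3 ≤ n → (c n : ℤ) = c (n - 1) + 2 * c (n - 2) - c (n - 3) := by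
  have hcard : ∀ n, c n = (compositionsWith OneOrPosEven n).ncard := hc
  have split_one {n : ℕ} (hn : 1 ≤ n) : c n = c (n - 1) + (evenHeaded n).ncard := by
    rw [hcard, hcard, ncard_compositionsWith_oneOrPosEven hn]
  have split_two {n : ℕ} (hn : 2 ≤ n) :
      (evenHeaded n).ncard = c (n - 2) + (evenHeaded (n - 2)).ncard := by
    rw [hcard, ncard_evenHeaded hn]
  have hc0 : c 0 = 1 := by
    rw [hcard, compositionsWith_zero (fun _ hx => hx.pos), Set.ncard_singleton]
  have hc1 : c 1 = 1 := by
    rw [split_one le_rfl, evenHeaded_eq_empty le_rfl, Set.ncard_empty, hc0]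
  have hc2 : c 2 = 2 := by
    rw [split_one (by norm_num), split_two le_rfl]
    norm_num [evenHeaded_eq_empty, hc0, hc1]
  refine ⟨hc0, hc1, hc2, fun n hn => ?_⟩
  have h₁ := split_one (n := n) (by omega)
  have h₂ := split_two (n := n) (by omega)
  have h₃ := split_one (n := n - 2) (by omega)
  rw [show n - 2 - 1 = n - 3 by omega] at h₃
  omega
end

section
/- Let r, s be coprime positive integers with s = t·r + 1 for some t ≥ 0. Define sequences by v(0) = 1, v(n) = v(n-1) + Σ_{p=1}^{r} [n - p - ⌈ps/r⌉ ≥ 1]·v(n - p - ⌈ps/r⌉) + [1 ≤ n-1 ≤ r+s-1] for n ≥ 1 (the last bracket accounting for prefix paths), and w̃(0) = 1, w̃(n) = w̃(n-1) + Σ_{p=1}^{r} [n - p - ⌈ps/r⌉ ≥ 1]·w̃(n - p - ⌈ps/r⌉) for n ≥ 1. Then v(n) = w̃(n + t + 1) for all n ≥ 0. -/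
/-! For `1 ≤ p ≤ r` the step is `f p = p (t + 1) + 1`, so `w` equals `1` on `[0, t + 1]`.
Unfolding `w (n + t + 1)` once, the steps `f p < n` give `v (n - f p)` by induction, and the
steps with `n ≤ f p ≤ n + t` land in `[1, t + 1]` and contribute `1` each. Exactly one `p ≥ 1`
has `p (t + 1)` in the window `[n - 1, n + t - 1]`, and it satisfies `p ≤ r` iff
`n - 1 ≤ r (t + 1) = r + s - 1`: this is the prefix-path term of `v`. -/

open Finset

theorem ceil_mul_div_eq_mul_add_one {p r s t : ℕ} (hp : 0 < p) (hpr : p ≤ r)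
    (hs : s = t * r + 1) : ⌈(p * s : ℚ) / r⌉ = (p * t + 1 : ℕ) := by
  have hr : (0 : ℚ) < r := by exact_mod_cast hp.trans_le hpr
  have hpq : (1 : ℚ) ≤ p := by exact_mod_cast hp
  have hprq : (p : ℚ) ≤ r := by exact_mod_cast hpr
  subst hs
  rw [Int.ceil_eq_iff, lt_div_iff₀ hr, div_le_iff₀ hr]
  push_cast
  constructor <;> nlinarith

theorem sum_boole_mul_mem_Ico {r m : ℕ} (hm : 0 < m) (a : ℕ) :
    (∑ p ∈ Icc 1 r, if a ≤ p * m ∧ p * m < a + m then 1 else 0) =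
      if 1 ≤ a ∧ a ≤ r * m then 1 else 0 := by
  have hwindow : ∀ p, (a ≤ p * m ∧ p * m < a + m) ↔ p = (a + m - 1) / m := by
    intro p
    rw [le_antisymm_iff, Nat.le_div_iff_mul_le hm, Nat.div_le_iff_le_mul_add_pred hm,
      mul_comm m p]
    omega
  have hmem : (a + m - 1) / m ∈ Icc 1 r ↔ 1 ≤ a ∧ a ≤ r * m := by
    rw [mem_Icc, Nat.le_div_iff_mul_le hm, Nat.div_le_iff_le_mul_add_pred hm, mul_comm m r]
    omega
  simp_rw [hwindow, sum_ite_eq', hmem]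

theorem apply_eq_apply_zero_of_le_steps {r k : ℕ} {f w : ℕ → ℕ}
    (hw : ∀ n, 1 ≤ n → w n = w (n - 1) + ∑ p ∈ Icc 1 r, if 1 ≤ n - f p then w (n - f p) else 0)
    (hf : ∀ p ∈ Icc 1 r, k ≤ f p) : ∀ m ≤ k, w m = w 0 := by
  intro m hm
  induction m with
  | zero => rfl
  | succ m ih =>
    rw [hw (m + 1) m.succ_pos, sum_eq_zero fun p hp => if_neg (by have := hf p hp; omega)]
    exact ih (by omega)

theorem ite_shift_eq_add_ite {v w : ℕ → ℕ} {n t G : ℕ}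
    (hw : ∀ m ≤ t + 1, w m = 1) (hvw : G < n → v (n - G) = w (n - G + t + 1)) :
    (if 1 ≤ n + 1 + t + 1 - (G + 1) then w (n + 1 + t + 1 - (G + 1)) else 0) =
      (if 1 ≤ n + 1 - (G + 1) then v (n + 1 - (G + 1)) else 0) +
        if n ≤ G ∧ G < n + (t + 1) then 1 else 0 := by
  by_cases hlt : G < n
  · rw [if_pos (by omega), if_pos (by omega), if_neg (by omega), add_zero,
      show n + 1 - (G + 1) = n - G by omega, hvw hlt]
    congr 1
    omega
  · rw [if_neg (show ¬1 ≤ n + 1 - (G + 1) by omega), zero_add]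
    split_ifs <;> first | omega | exact hw _ (by omega)

theorem v_eq_wtilde_shift_general (r s t : ℕ) (hst : s = t * r + 1)
    (f : ℕ → ℕ) (hf : ∀ p, f p = p + (⌈(p * s : ℚ) / r⌉).toNat)
    (v : ℕ → ℕ) (hv0 : v 0 = 1)
    (hv : ∀ n, 1 ≤ n →
      v n = v (n - 1) + (∑ p ∈ Finset.Icc 1 r, if 1 ≤ n - f p then v (n - f p) else 0) +
        (if 1 ≤ n - 1 ∧ n - 1 ≤ r + s - 1 then 1 else 0))
    (w : ℕ → ℕ) (hw0 : w 0 = 1)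
    (hw : ∀ n, 1 ≤ n →
      w n = w (n - 1) + ∑ p ∈ Finset.Icc 1 r, (if 1 ≤ n - f p then w (n - f p) else 0)) :
    ∀ n : ℕ, v n = w (n + t + 1) := by
  have hfp : ∀ p ∈ Icc 1 r, f p = p * (t + 1) + 1 := fun p hp => by
    rw [hf, ceil_mul_div_eq_mul_add_one (mem_Icc.1 hp).1 (mem_Icc.1 hp).2 hst, Int.toNat_natCast]
    ring
  have hsmall : ∀ m ≤ t + 1, w m = 1 := fun m hm => by
    refine (apply_eq_apply_zero_of_le_steps hw (fun p hp => ?_) m hm).trans hw0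
    rw [hfp p hp]
    have := Nat.le_mul_of_pos_left (t + 1) (mem_Icc.1 hp).1
    omega
  have hrs : r * (t + 1) = r + s - 1 := by
    rw [hst, Nat.add_sub_assoc le_add_self, Nat.add_sub_cancel]
    ring
  intro n
  induction n using Nat.strong_induction_on with
  | _ n ih =>
    rcases n with _ | n
    · rw [hv0, zero_add, hsmall _ le_rfl]
    have hterm : ∀ p ∈ Icc 1 r,
        (if 1 ≤ n + 1 + t + 1 - f p then w (n + 1 + t + 1 - f p) else 0) =
          (if 1 ≤ n + 1 - f p then v (n + 1 - f p) else 0) +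
            if n ≤ p * (t + 1) ∧ p * (t + 1) < n + (t + 1) then 1 else 0 := fun p hp => by
      rw [hfp p hp]
      exact ite_shift_eq_add_ite hsmall fun h => ih _ (by omega)
    rw [hv (n + 1) (by omega), hw _ (by omega), sum_congr rfl hterm, sum_add_distrib,
      sum_boole_mul_mem_Ico (by omega : 0 < t + 1), Nat.add_sub_cancel, Nat.add_sub_cancel,
      ih n (by omega), hrs, show n + 1 + t = n + t + 1 by omega]
    ring

theorem v_eq_wtilde_shift (r s t : ℕ) (hr : 0 < r) (hs : 0 < s)
    (hco : Nat.Coprime r s) (hst : s = t * r + 1)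
    (f : ℕ → ℕ) (hf : ∀ p, f p = p + (⌈(p * s : ℚ) / r⌉).toNat)
    (v : ℕ → ℕ) (hv0 : v 0 = 1)
    (hv : ∀ n, 1 ≤ n →
      v n = v (n - 1) + (∑ p ∈ Finset.Icc 1 r, if 1 ≤ n - f p then v (n - f p) else 0) +
        (if 1 ≤ n - 1 ∧ n - 1 ≤ r + s - 1 then 1 else 0))
    (w : ℕ → ℕ) (hw0 : w 0 = 1)
    (hw : ∀ n, 1 ≤ n →
      w n = w (n - 1) + ∑ p ∈ Finset.Icc 1 r, (if 1 ≤ n - f p then w (n - f p) else 0)) :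
    ∀ n : ℕ, v n = w (n + t + 1) :=
  v_eq_wtilde_shift_general r s t hst f hf v hv0 hv w hw0 hw
end

section
/- Let r, s be coprime positive integers with r·t + 1 < s < (t+1)·r for some t ≥ 1 (so s ≠ tr+1). Then there exists j with 1 ≤ j ≤ r - 1 such that ⌈(j+1)·s/r⌉ - ⌈j·s/r⌉ = t + 1. -/
/-! Write `s = t r + d`. The bounds on `s` give `2 ≤ d < r`, and coprimality gives `d ∤ r`, so
`j = ⌊r / d⌋` satisfies `j d < r < (j + 1) d < 2 r`. Hence `⌈j s / r⌉ = j t + 1` while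
`⌈(j + 1) s / r⌉ = (j + 1) t + 2`. -/

theorem Int.ceil_natCast_div_eq_add_one {K : Type*} [Field K] [LinearOrder K]
    [IsStrictOrderedRing K] [FloorRing K] {n r q : ℕ} (hlo : q * r < n) (hhi : n ≤ (q + 1) * r) :
    ⌈(n : K) / r⌉ = q + 1 := by
  have hr : (0 : K) < r := by
    have : 0 < r := Nat.pos_of_ne_zero (by rintro rfl; omega)
    exact_mod_cast this
  rw [Int.ceil_eq_iff, Int.cast_add, Int.cast_natCast, Int.cast_one, add_sub_cancel_right,
    lt_div_iff₀ hr, div_le_iff₀ hr]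
  exact ⟨by exact_mod_cast hlo, by exact_mod_cast hhi⟩

theorem Nat.div_mul_lt_and_lt_succ_div_mul {r d : ℕ} (hpos : 0 < d) (hd : ¬ d ∣ r) :
    r / d * d < r ∧ r < (r / d + 1) * d := by
  have hmod : r % d ≠ 0 := fun h => hd (Nat.dvd_of_mod_eq_zero h)
  have := Nat.div_add_mod' r d
  have := Nat.mod_lt r hpos
  rw [Nat.succ_mul]
  omega

theorem exists_ceil_gap_general (r s t : ℕ) (hco : Nat.Coprime r s)
    (h1 : r * t + 1 < s) (h2 : s < (t + 1) * r) :
    ∃ j : ℕ, 1 ≤ j ∧ j ≤ r - 1 ∧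
      ⌈((j + 1 : ℕ) * s : ℚ) / r⌉ - ⌈(j * s : ℚ) / r⌉ = (t : ℤ) + 1 := by
  rw [Nat.mul_comm] at h1
  rw [Nat.succ_mul] at h2
  obtain ⟨d, rfl⟩ : ∃ d, s = d + t * r := ⟨s - t * r, by omega⟩
  have hnd : ¬ d ∣ r := fun hdr =>
    absurd (((Nat.coprime_add_mul_right_right r d t).1 hco).symm.eq_one_of_dvd hdr) (by omega)
  obtain ⟨hlo, hhi⟩ := Nat.div_mul_lt_and_lt_succ_div_mul (by omega) hnd
  set j := r / d
  have hj : 1 ≤ j := Nat.div_pos (by omega) (by omega)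
  refine ⟨j, hj, ?_, ?_⟩
  · have : j ≤ j * d := Nat.le_mul_of_pos_right j (by omega)
    omega
  simp only [← Nat.cast_mul]
  rw [Int.ceil_natCast_div_eq_add_one (q := (j + 1) * t + 1) (by nlinarith) (by nlinarith),
    Int.ceil_natCast_div_eq_add_one (q := j * t) (by nlinarith) (by nlinarith)]
  push_cast
  ring

theorem exists_ceil_gap (r s t : ℕ) (hr : 0 < r) (hs : 0 < s) (hco : Nat.Coprime r s)
    (ht : 1 ≤ t) (h1 : r * t + 1 < s) (h2 : s < (t + 1) * r) :
    ∃ j : ℕ, 1 ≤ j ∧ j ≤ r - 1 ∧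
      ⌈((j + 1 : ℕ) * s : ℚ) / r⌉ - ⌈(j * s : ℚ) / r⌉ = (t : ℤ) + 1 :=
  exists_ceil_gap_general r s t hco h1 h2
end

section
/- Let r, s be coprime positive integers. The class R̃^{r/s} of Dyck paths of height at most 2 whose factorization U(UD)^{p_1}(DU)^{v_1}⋯(UD)^{p_k}(DU)^{v_k}D satisfies p_i ≤ r and v_i ≥ ⌈p_i s/r⌉ for all i, is in bijection, at each semilength n + 1, with the set of compositions of n with parts in à = {1} ∪ {p + ⌈ps/r⌉ : 1 ≤ p ≤ r}; the bijection sends the part 1 to the factor UD and the part p + ⌈ps/r⌉ to the factor U(UD)^p(DU)^{⌈ps/r⌉ - 1}D, then appends a final factor UD. -/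
/-- `true` is an up step `U`, `false` is a down step `D`. -/
def rep (w : List Bool) (n : ℕ) : List Bool := (List.replicate n w).flatten

/-- The word `U (UD)^{p_1} (DU)^{v_1} ⋯ (UD)^{p_k} (DU)^{v_k} D`. -/
def wordOfBlocks (blocks : List (ℕ × ℕ)) : List Bool :=
  [true] ++ (blocks.map (fun pv => rep [true, false] pv.1 ++ rep [false, true] pv.2)).flatten
    ++ [false]

/-- Maximality constraints of the canonical factorization. -/
def goodBlocks (blocks : List (ℕ × ℕ)) : Prop :=
  ∀ i (h : i < blocks.length),
    (i ≠ 0 → 1 ≤ (blocks.get ⟨i, h⟩).1) ∧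
    (i ≠ blocks.length - 1 → 1 ≤ (blocks.get ⟨i, h⟩).2)

/-- Membership in `R̃^{r/s}`: the empty path, or a path whose canonical factorization
satisfies `p_i ≤ r` and `v_i ≥ ⌈p_i s / r⌉` for all `i`. -/
def memRtilde (r s : ℕ) (P : List Bool) : Prop :=
  P = [] ∨ ∃ blocks : List (ℕ × ℕ), goodBlocks blocks ∧
    (∀ pv ∈ blocks, pv.1 ≤ r ∧ (⌈(pv.1 * s : ℚ) / r⌉).toNat ≤ pv.2) ∧
    wordOfBlocks blocks = P

/- ### Auxiliary definitions -/

/-- The valley requirement `⌈ps/r⌉` as a natural number. -/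
def vfn (r s p : ℕ) : ℕ := (⌈(p * s : ℚ) / r⌉).toNat

/-- Interior of `wordOfBlocks`. -/
def Sblk (blocks : List (ℕ × ℕ)) : List Bool :=
  (blocks.map (fun pv => rep [true, false] pv.1 ++ rep [false, true] pv.2)).flatten

lemma wordOfBlocks_eq (blocks : List (ℕ × ℕ)) :
    wordOfBlocks blocks = [true] ++ Sblk blocks ++ [false] := rfl

lemma Sblk_nil : Sblk [] = [] := rfl

lemma Sblk_cons (p v : ℕ) (rest : List (ℕ × ℕ)) :
    Sblk ((p, v) :: rest) = rep [true, false] p ++ (rep [false, true] v ++ Sblk rest) := by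
  simp [Sblk, List.append_assoc]

lemma rep_zero (w : List Bool) : rep w 0 = [] := rfl

lemma rep_succ (w : List Bool) (n : ℕ) : rep w (n + 1) = w ++ rep w n := by
  simp [rep, List.replicate_succ]

lemma rep_one (w : List Bool) : rep w 1 = w := by
  simp [rep]

lemma rep_add (w : List Bool) (a b : ℕ) : rep w (a + b) = rep w a ++ rep w b := by
  rw [rep, rep, rep, List.replicate_add, List.flatten_append]

lemma rep_succ' (w : List Bool) (n : ℕ) : rep w (n + 1) = rep w n ++ w := by
  rw [rep_add, rep_one]

lemma length_rep (w : List Bool) (n : ℕ) : (rep w n).length = n * w.length := by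
  simp [rep]

/-- shift lemma: `(UD)^n U = U (DU)^n`. -/
lemma rep_shift (n : ℕ) :
    rep [true, false] n ++ [true] = true :: rep [false, true] n := by
  induction n with
  | zero => rfl
  | succ m ih =>
    rw [rep_succ, rep_succ]
    simp only [List.append_assoc, List.cons_append, List.nil_append, ih]

lemma rep_shift' (n : ℕ) (X : List Bool) :
    rep [true, false] n ++ ([true] ++ X) = [true] ++ (rep [false, true] n ++ X) := by
  rw [← List.append_assoc, rep_shift]
  simp

lemma rep_merge' (m : ℕ) (X : List Bool) :
    rep [false, true] m ++ ([false] ++ ([true] ++ X)) = rep [false, true] (m + 1) ++ X := by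
  rw [rep_succ']
  simp

lemma rep_add' (w : List Bool) (a b : ℕ) (X : List Bool) :
    rep w a ++ (rep w b ++ X) = rep w (a + b) ++ X := by
  rw [rep_add, List.append_assoc]

lemma vfn_zero (r s : ℕ) : vfn r s 0 = 0 := by
  simp [vfn]

lemma vfn_pos (r s p : ℕ) (hr : 0 < r) (hs : 0 < s) (hp : 1 ≤ p) : 1 ≤ vfn r s p := by
  have h : (0 : ℚ) < (p * s : ℚ) / r := by
    apply div_pos
    · have h1 : (1 : ℚ) ≤ (p : ℚ) := by exact_mod_cast hp
      have h2 : (1 : ℚ) ≤ (s : ℚ) := by exact_mod_cast hs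
      nlinarith
    · exact_mod_cast hr
  have : (0 : ℤ) < ⌈(p * s : ℚ) / r⌉ := Int.ceil_pos.mpr h
  unfold vfn
  omega

section Main

variable {r s : ℕ} {f : ℕ → ℕ} {wd : ℕ → List Bool}

/-- parts allowed in compositions -/
def okpart (r : ℕ) (f : ℕ → ℕ) (x : ℕ) : Prop :=
  x = 1 ∨ ∃ p : ℕ, 1 ≤ p ∧ p ≤ r ∧ x = f p

lemma wd_fp (hwdp : ∀ p, 1 ≤ p → p ≤ r →
      wd (f p) = [true] ++ rep [true, false] p ++
        rep [false, true] ((⌈(p * s : ℚ) / r⌉).toNat - 1) ++ [false])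
    (p : ℕ) (h1 : 1 ≤ p) (h2 : p ≤ r) :
    wd (f p) = [true] ++ rep [true, false] p ++ rep [false, true] (vfn r s p - 1) ++ [false] :=
  hwdp p h1 h2

lemma length_wd (hr : 0 < r) (hs : 0 < s)
    (hf : ∀ p, f p = p + (⌈(p * s : ℚ) / r⌉).toNat)
    (hwd1 : wd 1 = [true, false])
    (hwdp : ∀ p, 1 ≤ p → p ≤ r →
      wd (f p) = [true] ++ rep [true, false] p ++
        rep [false, true] ((⌈(p * s : ℚ) / r⌉).toNat - 1) ++ [false])
    (x : ℕ) (hx : okpart r f x) : (wd x).length = 2 * x := by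
  rcases hx with rfl | ⟨p, hp1, hp2, rfl⟩
  · simp [hwd1]
  · have hv := vfn_pos r s p hr hs hp1
    rw [wd_fp hwdp p hp1 hp2, hf p]
    show _ = 2 * (p + vfn r s p)
    simp [length_rep]
    omega

lemma length_flat (hr : 0 < r) (hs : 0 < s)
    (hf : ∀ p, f p = p + (⌈(p * s : ℚ) / r⌉).toNat)
    (hwd1 : wd 1 = [true, false])
    (hwdp : ∀ p, 1 ≤ p → p ≤ r →
      wd (f p) = [true] ++ rep [true, false] p ++
        rep [false, true] ((⌈(p * s : ℚ) / r⌉).toNat - 1) ++ [false]) :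
    ∀ l : List ℕ, (∀ x ∈ l, okpart r f x) → ((l.map wd).flatten).length = 2 * l.sum := by
  intro l
  induction l with
  | nil => simp
  | cons x t ih =>
    intro h
    simp only [List.map_cons, List.flatten_cons, List.length_append, List.sum_cons]
    rw [ih (fun y hy => h y (List.mem_cons_of_mem _ hy)),
      length_wd hr hs hf hwd1 hwdp x (h x (List.mem_cons_self))]
    ring

/- ### Forward direction: building blocks from a composition -/

lemma exists_blocks (hr : 0 < r) (hs : 0 < s)
    (hf : ∀ p, f p = p + (⌈(p * s : ℚ) / r⌉).toNat)
    (hwd1 : wd 1 = [true, false])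
    (hwdp : ∀ p, 1 ≤ p → p ≤ r →
      wd (f p) = [true] ++ rep [true, false] p ++
        rep [false, true] ((⌈(p * s : ℚ) / r⌉).toNat - 1) ++ [false]) :
    ∀ l : List ℕ, (∀ x ∈ l, okpart r f x) →
    ∃ blocks : List (ℕ × ℕ), blocks ≠ [] ∧
      (∀ pv ∈ blocks.tail, 1 ≤ pv.1) ∧
      (∀ pv ∈ blocks.dropLast, 1 ≤ pv.2) ∧
      (∀ pv ∈ blocks, pv.1 ≤ r ∧ vfn r s pv.1 ≤ pv.2) ∧
      [true] ++ (Sblk blocks ++ [false]) = (l.map wd).flatten ++ [true, false] := by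
  intro l
  induction l with
  | nil =>
    intro _
    refine ⟨[(0, 0)], by simp, by simp, by simp, ?_, by rfl⟩
    intro pv hpv
    simp only [List.mem_singleton] at hpv
    subst hpv
    simp [vfn_zero]
  | cons x t ih =>
    intro h
    obtain ⟨blocks, hne, htl, hdl, hcon, hword⟩ :=
      ih (fun y hy => h y (List.mem_cons_of_mem _ hy))
    obtain ⟨⟨p0, v0⟩, rest, rfl⟩ : ∃ b rest, blocks = b :: rest := by
      rcases blocks with _ | ⟨b, rest⟩
      · exact absurd rfl hne
      · exact ⟨b, rest, rfl⟩
    rcases h x (List.mem_cons_self) with rfl | ⟨p, hp1, hp2, rfl⟩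
    · -- part 1
      by_cases hp0 : p0 = 0
      · subst hp0
        refine ⟨(0, v0 + 1) :: rest, by simp, htl, ?_, ?_, ?_⟩
        · rcases rest with _ | ⟨b, rs⟩
          · simp
          · intro pv hpv
            rw [List.dropLast_cons₂] at hpv
            rcases List.mem_cons.mp hpv with rfl | hpv
            · simp
            · exact hdl pv (by rw [List.dropLast_cons₂]; exact List.mem_cons_of_mem _ hpv)
        · intro pv hpv
          rcases List.mem_cons.mp hpv with rfl | hpv
          · exact ⟨Nat.zero_le _, by simp [vfn_zero]⟩
          · exact hcon pv (List.mem_cons_of_mem _ hpv)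
        · simp only [Sblk_cons, rep_zero, List.nil_append, List.append_assoc] at hword ⊢
          simp only [List.map_cons, List.flatten_cons, hwd1, List.append_assoc]
          rw [← hword, rep_succ]
          simp
      · -- p0 ≥ 1 : prepend a new (0,1) block
        refine ⟨(0, 1) :: (p0, v0) :: rest, by simp, ?_, ?_, ?_, ?_⟩
        · intro pv hpv
          rcases List.mem_cons.mp hpv with rfl | hpv
          · omega
          · exact htl pv hpv
        · intro pv hpv
          rw [List.dropLast_cons₂] at hpv
          rcases List.mem_cons.mp hpv with rfl | hpv
          · simp
          · exact hdl pv hpv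
        · intro pv hpv
          rcases List.mem_cons.mp hpv with rfl | hpv
          · exact ⟨Nat.zero_le _, by simp [vfn_zero]⟩
          · exact hcon pv hpv
        · simp only [Sblk_cons, rep_zero, List.nil_append, List.append_assoc,
            List.map_cons, List.flatten_cons, hwd1]
          rw [← hword]
          simp [Sblk_cons, rep_succ, rep_zero, List.append_assoc]
    · -- part f p
      have hv := vfn_pos r s p hr hs hp1
      by_cases hp0 : p0 = 0
      · subst hp0
        refine ⟨(p, vfn r s p + v0) :: rest, by simp, htl, ?_, ?_, ?_⟩
        · rcases rest with _ | ⟨b, rs⟩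
          · simp
          · intro pv hpv
            rw [List.dropLast_cons₂] at hpv
            rcases List.mem_cons.mp hpv with rfl | hpv
            · simp; omega
            · exact hdl pv (by rw [List.dropLast_cons₂]; exact List.mem_cons_of_mem _ hpv)
        · intro pv hpv
          rcases List.mem_cons.mp hpv with rfl | hpv
          · exact ⟨hp2, by simp⟩
          · exact hcon pv (List.mem_cons_of_mem _ hpv)
        · simp only [Sblk_cons, rep_zero, List.nil_append, List.append_assoc] at hword ⊢
          simp only [List.map_cons, List.flatten_cons, wd_fp hwdp p hp1 hp2,
            List.append_assoc]
          rw [← hword, rep_merge', rep_add']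
          have hnum : vfn r s p - 1 + 1 + v0 = vfn r s p + v0 := by omega
          rw [hnum]
      · refine ⟨(p, vfn r s p) :: (p0, v0) :: rest, by simp, ?_, ?_, ?_, ?_⟩
        · intro pv hpv
          rcases List.mem_cons.mp hpv with rfl | hpv
          · omega
          · exact htl pv hpv
        · intro pv hpv
          rw [List.dropLast_cons₂] at hpv
          rcases List.mem_cons.mp hpv with rfl | hpv
          · exact hv
          · exact hdl pv hpv
        · intro pv hpv
          rcases List.mem_cons.mp hpv with rfl | hpv
          · exact ⟨hp2, le_refl _⟩
          · exact hcon pv hpv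
        · simp only [Sblk_cons, List.append_assoc, List.map_cons, List.flatten_cons,
            wd_fp hwdp p hp1 hp2]
          rw [← hword, rep_merge']
          have hnum : vfn r s p - 1 + 1 = vfn r s p := by omega
          rw [hnum]
          simp [Sblk_cons, List.append_assoc]

lemma good_of (blocks : List (ℕ × ℕ))
    (h1 : ∀ pv ∈ blocks.tail, 1 ≤ pv.1) (h2 : ∀ pv ∈ blocks.dropLast, 1 ≤ pv.2) :
    goodBlocks blocks := by
  intro i h
  constructor
  · intro hi
    obtain ⟨j, rfl⟩ : ∃ j, i = j + 1 := ⟨i - 1, by omega⟩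
    have hj : j < blocks.tail.length := by simp; omega
    have he : blocks.tail[j] = blocks[j + 1] := List.getElem_tail ..
    have hmem : blocks[j + 1] ∈ blocks.tail := he ▸ List.getElem_mem hj
    simpa using h1 _ hmem
  · intro hi
    have hj : i < blocks.dropLast.length := by simp; omega
    have he : blocks.dropLast[i] = blocks[i] := List.getElem_dropLast ..
    have hmem : blocks[i] ∈ blocks.dropLast := he ▸ List.getElem_mem hj
    simpa using h2 _ hmem

/- ### Backward direction: from blocks to a composition -/

def fromBlocks (r s : ℕ) (f : ℕ → ℕ) : List (ℕ × ℕ) → List ℕ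
  | [] => []
  | (p, v) :: rest =>
      (if p = 0 then [] else [f p]) ++ List.replicate (v - vfn r s p) 1
        ++ fromBlocks r s f rest

lemma flat_replicate_one (hwd1 : wd 1 = [true, false]) (k : ℕ) :
    (((List.replicate k 1).map wd).flatten) = rep [true, false] k := by
  simp [rep, hwd1]

lemma fromBlocks_word (hr : 0 < r) (hs : 0 < s)
    (hwd1 : wd 1 = [true, false])
    (hwdp : ∀ p, 1 ≤ p → p ≤ r →
      wd (f p) = [true] ++ rep [true, false] p ++
        rep [false, true] ((⌈(p * s : ℚ) / r⌉).toNat - 1) ++ [false]) :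
    ∀ blocks : List (ℕ × ℕ), (∀ pv ∈ blocks, pv.1 ≤ r ∧ vfn r s pv.1 ≤ pv.2) →
    ((fromBlocks r s f blocks).map wd).flatten ++ [true, false]
      = [true] ++ (Sblk blocks ++ [false]) := by
  intro blocks
  induction blocks with
  | nil => intro _; rfl
  | cons b rest ih =>
    obtain ⟨p, v⟩ := b
    intro h
    obtain ⟨hpr, hpv⟩ := h (p, v) (List.mem_cons_self)
    have hpr' : p ≤ r := hpr
    have hpv' : vfn r s p ≤ v := hpv
    have hrest := ih (fun pv hpv => h pv (List.mem_cons_of_mem _ hpv))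
    by_cases hp0 : p = 0
    · subst hp0
      rw [show fromBlocks r s f ((0, v) :: rest) = List.replicate v 1 ++ fromBlocks r s f rest
        from by simp [fromBlocks, vfn_zero]]
      rw [List.map_append, List.flatten_append, flat_replicate_one hwd1, Sblk_cons, rep_zero]
      simp only [List.nil_append, List.append_assoc]
      rw [hrest, rep_shift']
    · have hp1 : 1 ≤ p := by omega
      have hv := vfn_pos r s p hr hs hp1
      rw [show fromBlocks r s f ((p, v) :: rest)
          = f p :: (List.replicate (v - vfn r s p) 1 ++ fromBlocks r s f rest)
        from by simp [fromBlocks, hp0]]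
      rw [List.map_cons, List.flatten_cons, List.map_append, List.flatten_append,
        flat_replicate_one hwd1, wd_fp hwdp p hp1 hpr, Sblk_cons]
      simp only [List.append_assoc]
      rw [hrest, rep_shift', rep_merge', rep_add']
      have hnum : vfn r s p - 1 + 1 + (v - vfn r s p) = v := by omega
      rw [hnum]

/- ### Injectivity -/

lemma part_pos (hf : ∀ p, f p = p + (⌈(p * s : ℚ) / r⌉).toNat)
    (x : ℕ) (hx : okpart r f x) : 1 ≤ x := by
  rcases hx with rfl | ⟨p, hp1, _, rfl⟩
  · omega
  · rw [hf p]; omega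

lemma Fhead (k : ℕ) (z : List Bool) :
    ∃ A, rep [false, true] k ++ false :: z = false :: A := by
  cases k with
  | zero => exact ⟨z, by rw [rep_zero]; rfl⟩
  | succ m => exact ⟨true :: (rep [false, true] m ++ false :: z), by rw [rep_succ]; simp⟩

lemma decode_aux : ∀ (p q : ℕ) (A B : List Bool),
    rep [true, false] p ++ false :: A = rep [true, false] q ++ false :: B →
    p = q ∧ A = B := by
  intro p
  induction p with
  | zero =>
    intro q A B h
    cases q with
    | zero =>
      simp only [rep_zero, List.nil_append, List.cons.injEq, true_and] at h
      exact ⟨rfl, h⟩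
    | succ m =>
      rw [rep_zero, rep_succ] at h
      simp at h
  | succ m ih =>
    intro q A B h
    cases q with
    | zero =>
      rw [rep_zero, rep_succ] at h
      simp at h
    | succ k =>
      rw [rep_succ, rep_succ] at h
      simp only [List.cons_append, List.nil_append, List.cons.injEq, true_and] at h
      obtain ⟨h1, h2⟩ := ih k A B h
      exact ⟨by omega, h2⟩

lemma decode (hr : 0 < r) (hs : 0 < s)
    (hf : ∀ p, f p = p + (⌈(p * s : ℚ) / r⌉).toNat)
    (hwd1 : wd 1 = [true, false])
    (hwdp : ∀ p, 1 ≤ p → p ≤ r →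
      wd (f p) = [true] ++ rep [true, false] p ++
        rep [false, true] ((⌈(p * s : ℚ) / r⌉).toNat - 1) ++ [false]) :
    ∀ l1 l2 : List ℕ, (∀ x ∈ l1, okpart r f x) → (∀ x ∈ l2, okpart r f x) →
      (l1.map wd).flatten = (l2.map wd).flatten → l1 = l2 := by
  intro l1
  induction l1 with
  | nil =>
    intro l2 _ h2 h
    cases l2 with
    | nil => rfl
    | cons y t2 =>
      exfalso
      simp only [List.map_nil, List.flatten_nil, List.map_cons, List.flatten_cons] at h
      have h0 : wd y = [] := (List.append_eq_nil_iff.mp h.symm).1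
      have hlen := length_wd hr hs hf hwd1 hwdp y (h2 y (List.mem_cons_self))
      have hy := part_pos hf y (h2 y (List.mem_cons_self))
      rw [h0] at hlen
      simp at hlen
      omega
  | cons x t1 ih =>
    intro l2 h1 h2 h
    cases l2 with
    | nil =>
      exfalso
      simp only [List.map_nil, List.flatten_nil, List.map_cons, List.flatten_cons] at h
      have h0 : wd x = [] := (List.append_eq_nil_iff.mp h).1
      have hlen := length_wd hr hs hf hwd1 hwdp x (h1 x (List.mem_cons_self))
      have hx := part_pos hf x (h1 x (List.mem_cons_self))
      rw [h0] at hlen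
      simp at hlen
      omega
    | cons y t2 =>
      have hx := h1 x (List.mem_cons_self)
      have hy := h2 y (List.mem_cons_self)
      have ht1 : ∀ z ∈ t1, okpart r f z := fun z hz => h1 z (List.mem_cons_of_mem _ hz)
      have ht2 : ∀ z ∈ t2, okpart r f z := fun z hz => h2 z (List.mem_cons_of_mem _ hz)
      simp only [List.map_cons, List.flatten_cons] at h
      rcases hx with rfl | ⟨p, hp1, hp2, rfl⟩ <;> rcases hy with rfl | ⟨q, hq1, hq2, rfl⟩
      · rw [hwd1] at h
        simp only [List.cons_append, List.nil_append, List.cons.injEq, true_and] at h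
        rw [ih t2 ht1 ht2 h]
      · obtain ⟨m, rfl⟩ : ∃ m, q = m + 1 := ⟨q - 1, by omega⟩
        rw [hwd1, wd_fp hwdp (m + 1) hq1 hq2, rep_succ] at h
        simp at h
      · obtain ⟨m, rfl⟩ : ∃ m, p = m + 1 := ⟨p - 1, by omega⟩
        rw [hwd1, wd_fp hwdp (m + 1) hp1 hp2, rep_succ] at h
        simp at h
      · rw [wd_fp hwdp p hp1 hp2, wd_fp hwdp q hq1 hq2] at h
        simp only [List.append_assoc, List.cons_append, List.nil_append,
          List.singleton_append, List.cons.injEq, true_and] at h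
        obtain ⟨A, hA⟩ := Fhead (vfn r s p - 1) ((t1.map wd).flatten)
        obtain ⟨B, hB⟩ := Fhead (vfn r s q - 1) ((t2.map wd).flatten)
        rw [hA, hB] at h
        obtain ⟨hpq, hAB⟩ := decode_aux p q A B h
        subst hpq
        subst hAB
        have hW : (t1.map wd).flatten = (t2.map wd).flatten := by
          have h3 := hA.trans hB.symm
          have h4 := List.append_cancel_left h3
          simpa using h4
        rw [ih t2 ht1 ht2 hW]

/- ### fromBlocks parts are valid -/

lemma fromBlocks_ok : ∀ blocks : List (ℕ × ℕ), (∀ pv ∈ blocks, pv.1 ≤ r) →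
    ∀ x ∈ fromBlocks r s f blocks, okpart r f x := by
  intro blocks
  induction blocks with
  | nil => intro _ x hx; simp [fromBlocks] at hx
  | cons b rest ih =>
    obtain ⟨p, v⟩ := b
    intro h x hx
    simp only [fromBlocks, List.append_assoc, List.mem_append] at hx
    rcases hx with hx | hx | hx
    · by_cases hp0 : p = 0
      · rw [if_pos hp0] at hx; simp at hx
      · rw [if_neg hp0] at hx
        simp only [List.mem_singleton] at hx
        subst hx
        exact Or.inr ⟨p, by omega, h (p, v) (List.mem_cons_self), rfl⟩
    · rw [List.eq_of_mem_replicate hx]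
      exact Or.inl rfl
    · exact ih (fun pv hpv => h pv (List.mem_cons_of_mem _ hpv)) x hx

end Main

theorem bijection_Rtilde_compositions (r s : ℕ) (hr : 0 < r) (hs : 0 < s)
    (hco : Nat.Coprime r s) (n : ℕ)
    (f : ℕ → ℕ) (hf : ∀ p, f p = p + (⌈(p * s : ℚ) / r⌉).toNat)
    (wd : ℕ → List Bool) (hwd1 : wd 1 = [true, false])
    (hwdp : ∀ p, 1 ≤ p → p ≤ r →
      wd (f p) = [true] ++ rep [true, false] p ++
        rep [false, true] ((⌈(p * s : ℚ) / r⌉).toNat - 1) ++ [false]) :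
    Set.BijOn (fun l : List ℕ => (l.map wd).flatten ++ [true, false])
      {l : List ℕ | l.sum = n ∧ ∀ x ∈ l, x = 1 ∨ ∃ p : ℕ, 1 ≤ p ∧ p ≤ r ∧ x = f p}
      {P : List Bool | memRtilde r s P ∧ P.length = 2 * (n + 1)} := by
  refine ⟨?_, ?_, ?_⟩
  · -- MapsTo
    rintro l ⟨hsum, hok⟩
    have hok' : ∀ x ∈ l, okpart r f x := hok
    constructor
    · right
      obtain ⟨blocks, _, htl, hdl, hcon, hword⟩ :=
        exists_blocks hr hs hf hwd1 hwdp l hok'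
      refine ⟨blocks, good_of blocks htl hdl, hcon, ?_⟩
      rw [wordOfBlocks_eq, List.append_assoc]
      exact hword
    · show ((l.map wd).flatten ++ [true, false]).length = 2 * (n + 1)
      rw [List.length_append, length_flat hr hs hf hwd1 hwdp l hok', hsum]
      simp
      omega
  · -- InjOn
    rintro l1 ⟨_, hok1⟩ l2 ⟨_, hok2⟩ heq
    have h := List.append_cancel_right heq
    exact decode hr hs hf hwd1 hwdp l1 l2 hok1 hok2 h
  · -- SurjOn
    rintro P ⟨hmem, hlen⟩
    rcases hmem with rfl | ⟨blocks, _, hcon, hword⟩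
    · exfalso
      simp at hlen
    · have hcon' : ∀ pv ∈ blocks, pv.1 ≤ r ∧ vfn r s pv.1 ≤ pv.2 := hcon
      set l := fromBlocks r s f blocks with hl
      have hok := @fromBlocks_ok r s f blocks (fun pv h => (hcon' pv h).1)
      have hwl : (l.map wd).flatten ++ [true, false] = P := by
        rw [hl, fromBlocks_word hr hs hwd1 hwdp blocks hcon', ← hword, wordOfBlocks_eq,
          List.append_assoc]
      have hlsum : l.sum = n := by
        have h1 := length_flat hr hs hf hwd1 hwdp l hok
        have h2 := congrArg List.length hwl
        rw [List.length_append, h1, hlen] at h2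
        simp at h2
        omega
      exact ⟨l, ⟨hlsum, hok⟩, hwl⟩
end
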